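/- Let n > 2 be odd and M_n the circulant matrix with entries m_j = (1/√n)·e^{(2πi/n)·j²}. Then M_n^n is a scalar multiple of the identity matrix by a complex number of modulus 1, and for 0 < s < n, M_n^s is not a scalar multiple of the identity. -/

import Mathlib

open Complex Real Matrix

/-- The circulant (shift) matrix whose `(i,j)` entry is `a (j - i)`. -/
def circ {n : ℕ} (a : ZMod n → ℂ) : Matrix (ZMod n) (ZMod n) ℂ :=
  fun i j => a (j - i)

/-- The circulant Gauss matrix `M_n` with `m_j = (1/√n)·e^{(2πi/n)·j²}`. -/
noncomputable def gaussMatrix (n : ℕ) : Matrix (ZMod n) (ZMod n) ℂ :=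
  circ (fun j => (1 / Real.sqrt n : ℂ) *
    Complex.exp (2 * Real.pi * Complex.I * ((j.val : ℂ) ^ 2) / n))

/-!
`M_n` is circulant, so the characters `χ_k(j) = e(kj)` of `ZMod n` (with `e(x) = e^{2πix/n}`)
form an eigenbasis, with eigenvalue `n^{-1/2} ∑_j e(j² + kj)`. Since `2` is invertible mod `n`,
completing the square turns this into `e(-(k/2)²) · ε` with `ε = G/√n` for the quadratic Gauss
sum `G`, and `|G|² = n`. The `n`-th powers of all eigenvalues are therefore the same number `ε^n`
of modulus one, whereas the eigenvalues at `k = 0` and `k = 1` differ by the primitive `n`-th root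
of unity `e(-(1/2)²)`, so their `s`-th powers differ for `0 < s < n`.
-/

open Finset ZMod ComplexConjugate

lemma Matrix.pow_mulVec_of_mulVec_eq_smul {ι R : Type*} [Fintype ι] [DecidableEq ι]
    [CommSemiring R] {A : Matrix ι ι R} {v : ι → R} {c : R} (h : A *ᵥ v = c • v) (s : ℕ) :
    A ^ s *ᵥ v = c ^ s • v := by
  induction s with
  | zero => simp
  | succ s ih => rw [pow_succ', ← mulVec_mulVec, ih, mulVec_smul, h, smul_smul, pow_succ]

lemma circ_mulVec_addChar {n : ℕ} [NeZero n] (a : ZMod n → ℂ) (ψ : AddChar (ZMod n) ℂ) :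
    circ a *ᵥ ⇑ψ = (∑ j, a j * ψ j) • ⇑ψ := by
  ext i
  rw [mulVec, dotProduct, ← Equiv.sum_comp (Equiv.addLeft i), Pi.smul_apply, smul_eq_mul,
    sum_mul]
  refine sum_congr rfl fun j _ => ?_
  simp only [circ, Equiv.coe_addLeft, add_sub_cancel_left, AddChar.map_add_eq_mul]
  ring

lemma Matrix.ext_of_mulVec_stdAddChar_mulShift {n : ℕ} [NeZero n]
    {A B : Matrix (ZMod n) (ZMod n) ℂ}
    (h : ∀ k, A *ᵥ ⇑(stdAddChar.mulShift k) = B *ᵥ ⇑(stdAddChar.mulShift k)) : A = B := by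
  have mulVec_eq_dft (C : Matrix (ZMod n) (ZMod n) ℂ) (i k : ZMod n) :
      (C *ᵥ ⇑(stdAddChar.mulShift k)) i = dft (E := ℂ) (N := n) (C i) (-k) := by
    simp only [mulVec, dotProduct, dft_apply, AddChar.mulShift_apply, smul_eq_mul, mul_neg,
      neg_neg]
    exact sum_congr rfl fun j _ => by rw [mul_comm, mul_comm j]
  funext i
  refine (dft (E := ℂ) (N := n)).injective (funext fun k => ?_)
  rw [← neg_neg k, ← mulVec_eq_dft, ← mulVec_eq_dft, h]

namespace AddChar

variable {R M : Type*} [CommRing R] [Fintype R]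

def quadGaussSum [CommRing M] (ψ : AddChar R M) : M := ∑ x, ψ (x ^ 2)

lemma sum_sq_add_mul [CommRing M] (ψ : AddChar R M) {b : R} (hb : 2 * b = 1) (k : R) :
    ∑ x, ψ (x ^ 2 + k * x) = ψ (-(b * k) ^ 2) * ψ.quadGaussSum := by
  rw [quadGaussSum, mul_sum, ← Equiv.sum_comp (Equiv.subRight (b * k))]
  refine sum_congr rfl fun x _ => ?_
  rw [← map_add_eq_mul]
  congr 1
  simp only [Equiv.subRight_apply]
  linear_combination (b * k * k - x * k) * hb

lemma quadGaussSum_mul_conj [DecidableEq R] {ψ : AddChar R ℂ} (hψ : ψ.IsPrimitive)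
    (h2 : IsUnit (2 : R)) : ψ.quadGaussSum * conj ψ.quadGaussSum = Fintype.card R := by
  have expand : ψ.quadGaussSum * conj ψ.quadGaussSum =
      ∑ t, ψ (t ^ 2) * ∑ y, ψ (y * (2 * t)) := by
    rw [quadGaussSum, map_sum, sum_mul_sum, sum_comm]
    simp_rw [mul_sum]
    conv_rhs => rw [sum_comm]
    refine sum_congr rfl fun y _ => ?_
    rw [← Equiv.sum_comp (Equiv.addRight y)]
    refine sum_congr rfl fun t _ => ?_
    rw [← map_neg_eq_conj, ← map_add_eq_mul, ← map_add_eq_mul, Equiv.coe_addRight]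
    ring_nf
  rw [expand, Fintype.sum_eq_single 0 fun t ht => ?_]
  · simp
  · rw [sum_mulShift _ hψ, if_neg (h2.mul_right_eq_zero.not.mpr ht), Nat.cast_zero, mul_zero]

lemma norm_quadGaussSum {ψ : AddChar R ℂ} (hψ : ψ.IsPrimitive) (h2 : IsUnit (2 : R)) :
    ‖ψ.quadGaussSum‖ = √(Fintype.card R) := by
  classical
  have h := quadGaussSum_mul_conj hψ h2
  rw [Complex.mul_conj] at h
  rw [Complex.norm_def, (by exact_mod_cast h : normSq ψ.quadGaussSum = Fintype.card R)]

end AddChar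

lemma ZMod.isUnit_two_of_odd {n : ℕ} (hodd : Odd n) : IsUnit (2 : ZMod n) := by
  simpa using (ZMod.isUnit_iff_coprime 2 n).mpr (Nat.coprime_two_left.mpr hodd)

section GaussMatrix

variable {n : ℕ} [NeZero n]

lemma stdAddChar_pow_eq_one_iff (x : ZMod n) (s : ℕ) :
    stdAddChar x ^ s = 1 ↔ (s : ZMod n) * x = 0 := by
  rw [← AddChar.map_nsmul_eq_pow, nsmul_eq_mul, ← AddChar.map_zero_eq_one (stdAddChar (N := n)),
    injective_stdAddChar.eq_iff]

variable (n) in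
lemma gaussMatrix_eq_circ :
    gaussMatrix n = circ fun j => (√n : ℂ)⁻¹ * stdAddChar (N := n) (j ^ 2) := by
  refine congrArg circ (funext fun j => ?_)
  have hsq : j ^ 2 = ((j.val ^ 2 : ℕ) : ℤ) := by push_cast; simp
  rw [one_div, hsq, stdAddChar_coe]
  push_cast
  rfl

variable (n) in
noncomputable def normalizedQuadGaussSum : ℂ :=
  (√n : ℂ)⁻¹ * (stdAddChar (N := n)).quadGaussSum

lemma norm_normalizedQuadGaussSum (h2 : IsUnit (2 : ZMod n)) :
    ‖normalizedQuadGaussSum n‖ = 1 := by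
  classical
  have hn : (0 : ℝ) < √n := Real.sqrt_pos.mpr (Nat.cast_pos.mpr (NeZero.pos n))
  rw [normalizedQuadGaussSum, norm_mul, AddChar.norm_quadGaussSum (isPrimitive_stdAddChar n) h2,
    ZMod.card, norm_inv, Complex.norm_real, Real.norm_of_nonneg hn.le, inv_mul_cancel₀ hn.ne']

lemma gaussMatrix_mulVec_mulShift {b : ZMod n} (hb : 2 * b = 1) (k : ZMod n) :
    gaussMatrix n *ᵥ ⇑(stdAddChar.mulShift k) =
      (stdAddChar (-(b * k) ^ 2) * normalizedQuadGaussSum n) • ⇑(stdAddChar.mulShift k) := by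
  rw [gaussMatrix_eq_circ, circ_mulVec_addChar, normalizedQuadGaussSum]
  simp_rw [AddChar.mulShift_apply, mul_assoc, ← mul_sum, ← AddChar.map_add_eq_mul,
    AddChar.sum_sq_add_mul _ hb, mul_left_comm]

end GaussMatrix

theorem gaussMatrix_pow_scalar_general (n : ℕ) [NeZero n] (hodd : Odd n) :
    (∃ c : ℂ, ‖c‖ = 1 ∧
      (gaussMatrix n) ^ n = c • (1 : Matrix (ZMod n) (ZMod n) ℂ)) ∧
    (∀ s : ℕ, 0 < s → s < n →
      ¬ ∃ c : ℂ, (gaussMatrix n) ^ s = c • (1 : Matrix (ZMod n) (ZMod n) ℂ)) := by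
  have h2 := ZMod.isUnit_two_of_odd hodd
  obtain ⟨b, hb⟩ := h2.exists_right_inv
  set ε := normalizedQuadGaussSum n
  have hε : ‖ε‖ = 1 := norm_normalizedQuadGaussSum h2
  have hpow (s : ℕ) (k : ZMod n) : gaussMatrix n ^ s *ᵥ ⇑(stdAddChar.mulShift k) =
      (stdAddChar (-(b * k) ^ 2) * ε) ^ s • ⇑(stdAddChar.mulShift k) :=
    pow_mulVec_of_mulVec_eq_smul (gaussMatrix_mulVec_mulShift hb k) s
  constructor
  · refine ⟨ε ^ n, by rw [norm_pow, hε, one_pow],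
      ext_of_mulVec_stdAddChar_mulShift fun k => ?_⟩
    rw [hpow, smul_mulVec, one_mulVec, mul_pow,
      (stdAddChar_pow_eq_one_iff _ _).mpr (by simp), one_mul]
  · rintro s hs0 hsn ⟨c, hc⟩
    have eigenvalue_eq (k : ZMod n) : (stdAddChar (-(b * k) ^ 2) * ε) ^ s = c := by
      simpa [hc, smul_mulVec] using (congrFun (hpow s k) 0).symm
    have hεs : ε ^ s ≠ 0 := pow_ne_zero _ (norm_ne_zero_iff.mp (hε ▸ one_ne_zero))
    have hroot : stdAddChar (-b ^ 2) ^ s = 1 := by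
      simpa [mul_pow, hεs] using (eigenvalue_eq 1).trans (eigenvalue_eq 0).symm
    have hunit : IsUnit (-b ^ 2) := ((IsUnit.of_mul_eq_one_right 2 hb).pow 2).neg
    rw [stdAddChar_pow_eq_one_iff, hunit.mul_left_eq_zero, natCast_eq_zero_iff] at hroot
    exact absurd (Nat.le_of_dvd hs0 hroot) hsn.not_ge

theorem gaussMatrix_pow_scalar (n : ℕ) [NeZero n] (hodd : Odd n) (hn2 : 2 < n) :
    (∃ c : ℂ, ‖c‖ = 1 ∧
      (gaussMatrix n) ^ n = c • (1 : Matrix (ZMod n) (ZMod n) ℂ)) ∧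
    (∀ s : ℕ, 0 < s → s < n →
      ¬ ∃ c : ℂ, (gaussMatrix n) ^ s = c • (1 : Matrix (ZMod n) (ZMod n) ℂ)) :=
  gaussMatrix_pow_scalar_general n hodd
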